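/- For every integer s ≥ 1, the type-A first dilation operation on a lattice path (changing the rightmost peak from an NSE peak to an NESE peak) increases the major index by exactly 1 and preserves the parity of x − W(x) for every peak, where x is the peak's weight and W(x) is the number of NSE peaks of weight ≤ x. -/

import Mathlib

/-- The four kinds of unitary steps: North-East, South-East, North, East. -/
inductive Step : Type
  | NE | SE | N | E
deriving DecidableEq, Repr

/-- Horizontal displacement of a step. -/
def stepDx : Step → ℕ
  | Step.N => 0
  | _ => 1

/-- Vertical displacement of a step. -/
def stepDy : Step → ℤ
  | Step.NE => 1
  | Step.N => 1
  | Step.SE => -1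
  | Step.E => 0

/-- The x-coordinate (weight) of the j-th vertex of the path. -/
def xCoord (l : List Step) (j : ℕ) : ℕ := ((l.take j).map stepDx).sum

/-- The y-coordinate (height) of the j-th vertex, for a path starting at (0, k−a). -/
def yCoord (k a : ℕ) (l : List Step) (j : ℕ) : ℤ :=
  ((k : ℤ) - (a : ℤ)) + ((l.take j).map stepDy).sum

/-- Vertex j is a peak: preceded by an NE step (NESE peak) or an N step (NSE peak)
and followed by an SE step. -/
def isPeakB (l : List Step) (j : ℕ) : Bool :=
  decide (1 ≤ j) && decide (j < l.length) &&
    (decide (l.getD (j - 1) Step.E = Step.NE) || decide (l.getD (j - 1) Step.E = Step.N)) &&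
    decide (l.getD j Step.E = Step.SE)

/-- The major index of a path: the sum of the weights of its peaks. -/
def majorIndex (l : List Step) : ℕ :=
  ∑ j ∈ Finset.range (l.length + 1), if isPeakB l j then xCoord l j else 0

/-- A lattice path satisfying the special (k,a)-conditions: it starts at (0, k−a) on the
y-axis, stays in the first quadrant with height < k, East steps occur only at height 0,
it ends on the x-axis, it is empty or ends with an SE step, and if the leftmost peak is
an NSE peak then the path starts with an NE step, except when it starts at (0,0) with an
E step. -/
def ValidPath (k a : ℕ) (l : List Step) : Prop :=
  (∀ j ≤ l.length, 0 ≤ yCoord k a l j ∧ yCoord k a l j < (k : ℤ)) ∧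
  (∀ j < l.length, l.getD j Step.E = Step.E → yCoord k a l j = 0) ∧
  yCoord k a l l.length = 0 ∧
  (l = [] ∨ l.getLast? = some Step.SE) ∧
  (∀ j, isPeakB l j = true → (∀ i < j, isPeakB l i = false) →
    l.getD (j - 1) Step.E = Step.N →
    (l.getD 0 Step.E = Step.NE ∨ (a = k ∧ l.getD 0 Step.E = Step.E)))

/-- The peak at vertex j has relative height at least h: there are two vertices of the
path at height y − h, one with abscissa ≤ x and one with abscissa > x, such that between
them there is no peak of height > y and every peak of height y has abscissa ≥ x. -/
def RelHeightGe (k a : ℕ) (l : List Step) (j h : ℕ) : Prop :=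
  ∃ j₁ j₂, j₁ ≤ l.length ∧ j₂ ≤ l.length ∧
    xCoord l j₁ ≤ xCoord l j ∧ xCoord l j < xCoord l j₂ ∧
    yCoord k a l j₁ = yCoord k a l j - h ∧ yCoord k a l j₂ = yCoord k a l j - h ∧
    ∀ i, j₁ ≤ i → i ≤ j₂ → isPeakB l i = true →
      yCoord k a l i ≤ yCoord k a l j ∧
        (yCoord k a l i = yCoord k a l j → xCoord l j ≤ xCoord l i)

/-- The relative height of the peak at vertex j: the largest h with `RelHeightGe`. -/
noncomputable def relHeight (k a : ℕ) (l : List Step) (j : ℕ) : ℕ :=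
  sSup {h : ℕ | RelHeightGe k a l j h}

/-- The number of peaks of relative height ≥ r. -/
noncomputable def peakCountGe (k a : ℕ) (l : List Step) (r : ℕ) : ℕ :=
  Nat.card {j : ℕ // isPeakB l j = true ∧ r ≤ relHeight k a l j}

/-- W(x): the number of NSE peaks of weight ≤ x. -/
noncomputable def Wcount (l : List Step) (x : ℕ) : ℕ :=
  Nat.card {j : ℕ // isPeakB l j = true ∧ l.getD (j - 1) Step.E = Step.N ∧ xCoord l j ≤ x}

/-- The leftmost peak of the path is an NSE peak. -/
def leftmostNSE (l : List Step) : Prop :=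
  ∃ j, isPeakB l j = true ∧ (∀ i < j, isPeakB l i = false) ∧
    l.getD (j - 1) Step.E = Step.N

/-- The leftmost peak of the path is an NESE peak. -/
def leftmostNESE (l : List Step) : Prop :=
  ∃ j, isPeakB l j = true ∧ (∀ i < j, isPeakB l i = false) ∧
    l.getD (j - 1) Step.E = Step.NE

/-- The peak at vertex j has even parity: x − r − W(x) is odd, where r is the relative
height and x the weight. -/
noncomputable def evenPeak (k a : ℕ) (l : List Step) (j : ℕ) : Prop :=
  Odd ((xCoord l j : ℤ) - (relHeight k a l j : ℤ) - (Wcount l (xCoord l j) : ℤ))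

/-- The peak at vertex j has odd parity: x − r − W(x) is even. -/
noncomputable def oddPeak (k a : ℕ) (l : List Step) (j : ℕ) : Prop :=
  Even ((xCoord l j : ℤ) - (relHeight k a l j : ℤ) - (Wcount l (xCoord l j) : ℤ))

section Aux

lemma getD_set_formula (l : List Step) (m n : ℕ) (v d : Step) (hm : m < l.length) :
    (l.set m v).getD n d = if n = m then v else l.getD n d := by
  by_cases h : n = m
  · subst h
    rw [if_pos rfl, List.getD_eq_getElem?_getD, List.getElem?_set_self',
      List.getElem?_eq_getElem hm]
    rfl
  · rw [if_neg h, List.getD_eq_getElem?_getD, List.getElem?_set_ne (fun h' => h h'.symm),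
      ← List.getD_eq_getElem?_getD]

lemma peak_facts {l : List Step} {j : ℕ} (h : isPeakB l j = true) :
    1 ≤ j ∧ j < l.length ∧ l.getD j Step.E = Step.SE := by
  simp only [isPeakB, Bool.and_eq_true, Bool.or_eq_true, decide_eq_true_eq] at h
  exact ⟨h.1.1.1, h.1.1.2, h.2⟩

lemma xCoord_eq_sum (l : List Step) : ∀ n, n ≤ l.length →
    xCoord l n = ∑ i ∈ Finset.range n, stepDx (l.getD i Step.E) := by
  intro n
  induction n with
  | zero => intro _; simp [xCoord]
  | succ m ih =>
    intro h
    have hm : m < l.length := h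
    rw [Finset.sum_range_succ, ← ih (le_of_lt hm)]
    unfold xCoord
    rw [List.take_succ]
    have h1 : l[m]? = some (l.getD m Step.E) := by
      rw [List.getElem?_eq_getElem hm, List.getD_eq_getElem?_getD,
        List.getElem?_eq_getElem hm]
      rfl
    rw [h1]
    simp

lemma xCoord_mono (l : List Step) {m n : ℕ} (hmn : m ≤ n) (hn : n ≤ l.length) :
    xCoord l m ≤ xCoord l n := by
  rw [xCoord_eq_sum l m (le_trans hmn hn), xCoord_eq_sum l n hn]
  exact Finset.sum_le_sum_of_subset (Finset.range_subset_range.2 hmn)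

lemma xCoord_succ_SE (l : List Step) {m : ℕ} (hm : m < l.length)
    (hSE : l.getD m Step.E = Step.SE) :
    xCoord l (m + 1) = xCoord l m + 1 := by
  rw [xCoord_eq_sum l (m+1) hm, xCoord_eq_sum l m (le_of_lt hm),
    Finset.sum_range_succ, hSE]
  rfl

end Aux

/-- The type-A first dilation (turning the rightmost peak, an NSE peak, into an NESE
peak by replacing the N step before it with an NE step) increases the major index by
exactly 1 and preserves the parity of x − W(x) for every peak. -/




theorem typeA_dilation (k a : ℕ) (l : List Step) (j : ℕ)
    (hval : ValidPath k a l)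
    (hpeak : isPeakB l j = true)
    (hNSE : l.getD (j - 1) Step.E = Step.N)
    (hrightmost : ∀ i, j < i → isPeakB l i = false) :
    majorIndex (l.set (j - 1) Step.NE) = majorIndex l + 1 ∧
    ∀ i, isPeakB (l.set (j - 1) Step.NE) i = true →
      ((xCoord (l.set (j - 1) Step.NE) i : ℤ) -
          (Wcount (l.set (j - 1) Step.NE) (xCoord (l.set (j - 1) Step.NE) i) : ℤ)) ≡
        ((xCoord l i : ℤ) - (Wcount l (xCoord l i) : ℤ)) [ZMOD 2] := by
  obtain ⟨hj1, hjlen, hjSE⟩ := peak_facts hpeak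
  have hj1len : j - 1 < l.length := lt_of_le_of_lt (Nat.sub_le j 1) hjlen
  set l' : List Step := l.set (j - 1) Step.NE with hl'
  have hlen' : l'.length = l.length := List.length_set
  have hgetD' : ∀ n d, l'.getD n d = if n = j - 1 then Step.NE else l.getD n d :=
    fun n d => getD_set_formula l (j-1) n Step.NE d hj1len
  -- peaks are unchanged
  have hpeak' : ∀ p, isPeakB l' p = isPeakB l p := by
    intro p
    rcases Nat.eq_zero_or_pos p with h0 | hp1
    · subst h0; simp [isPeakB]
    have hsecond : decide (l'.getD p Step.E = Step.SE)
        = decide (l.getD p Step.E = Step.SE) := by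
      by_cases hpj1 : p = j - 1
      · rw [hgetD', if_pos hpj1, hpj1, hNSE]
        simp
      · rw [hgetD', if_neg hpj1]
    by_cases hp : p = j
    · subst hp
      have h1 : l'.getD (p - 1) Step.E = Step.NE := by
        rw [hgetD', if_pos rfl]
      unfold isPeakB
      rw [hlen', h1, hNSE, hsecond]
      rw [show (decide (Step.NE = Step.NE) || decide (Step.NE = Step.N)) = true by decide,
        show (decide (Step.N = Step.NE) || decide (Step.N = Step.N)) = true by decide]
    · have h1 : l'.getD (p - 1) Step.E = l.getD (p - 1) Step.E := by
        rw [hgetD', if_neg (by omega)]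
      unfold isPeakB
      rw [hlen', h1, hsecond]
  -- xCoord change
  have hx' : ∀ n, n ≤ l.length →
      xCoord l' n = xCoord l n + (if j - 1 < n then 1 else 0) := by
    intro n hn
    rw [xCoord_eq_sum l' n (by rw [hlen']; exact hn), xCoord_eq_sum l n hn]
    have hstep : ∀ i, stepDx (l'.getD i Step.E)
        = stepDx (l.getD i Step.E) + (if i = j - 1 then 1 else 0) := by
      intro i
      by_cases h : i = j - 1
      · rw [hgetD', if_pos h, if_pos h, h, hNSE]
        rfl
      · rw [hgetD', if_neg h, if_neg h]
        omega
    calc (∑ i ∈ Finset.range n, stepDx (l'.getD i Step.E))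
        = ∑ i ∈ Finset.range n,
            (stepDx (l.getD i Step.E) + (if i = j - 1 then 1 else 0)) := by
          exact Finset.sum_congr rfl (fun i _ => hstep i)
      _ = (∑ i ∈ Finset.range n, stepDx (l.getD i Step.E))
            + (if j - 1 ∈ Finset.range n then 1 else 0) := by
          rw [Finset.sum_add_distrib, Finset.sum_ite_eq' (Finset.range n) (j-1) (fun _ => 1)]
      _ = (∑ i ∈ Finset.range n, stepDx (l.getD i Step.E))
            + (if j - 1 < n then 1 else 0) := by
          simp [Finset.mem_range]
  have hpeaklt : ∀ p, isPeakB l p = true → p ≤ j := by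
    intro p hp
    by_contra h
    rw [hrightmost p (by omega)] at hp
    exact Bool.false_ne_true hp
  -- major index
  have hmaj : majorIndex l' = majorIndex l + 1 := by
    unfold majorIndex
    rw [hlen']
    have hterm : ∀ p ∈ Finset.range (l.length + 1),
        (if isPeakB l' p then xCoord l' p else 0)
          = (if isPeakB l p then xCoord l p else 0) + (if p = j then 1 else 0) := by
      intro p hp
      rw [Finset.mem_range] at hp
      rw [hpeak' p]
      by_cases hpk : isPeakB l p = true
      · rw [if_pos hpk, if_pos hpk, hx' p (by omega)]
        by_cases hpj : p = j
        · rw [if_pos hpj, if_pos (by omega : j - 1 < p)]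
        · have hple : p ≤ j := hpeaklt p hpk
          have : ¬ (j - 1 < p) := by
            obtain ⟨_, _, _⟩ := peak_facts hpk
            omega
          rw [if_neg this, if_neg hpj]
      · have hpj : p ≠ j := fun h => hpk (h ▸ hpeak)
        rw [if_neg hpk, if_neg hpk, if_neg hpj]
    rw [Finset.sum_congr rfl hterm, Finset.sum_add_distrib,
      Finset.sum_ite_eq' (Finset.range (l.length + 1)) j (fun _ => 1),
      if_pos (Finset.mem_range.2 (by omega))]
  refine ⟨hmaj, ?_⟩
  intro i hi
  rw [hpeak' i] at hi
  obtain ⟨hi1, hilen, hiSE⟩ := peak_facts hi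
  have hile : i ≤ j := hpeaklt i hi
  by_cases hij : i = j
  · -- the rightmost peak itself
    subst hij
    set x := xCoord l i with hxdef
    have hxi' : xCoord l' i = x + 1 := by
      rw [hx' i (le_of_lt hilen), if_pos (by omega)]
    -- W-count relation
    have hSfin : {p : ℕ | isPeakB l' p = true ∧ l'.getD (p - 1) Step.E = Step.N ∧
        xCoord l' p ≤ x + 1}.Finite := by
      apply Set.Finite.subset (Set.finite_Iio l.length)
      intro p hp
      have := (peak_facts hp.1).2.1
      rw [hlen'] at this
      exact this
    have hjnot : i ∉ {p : ℕ | isPeakB l' p = true ∧ l'.getD (p - 1) Step.E = Step.N ∧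
        xCoord l' p ≤ x + 1} := by
      intro hmem
      have := hmem.2.1
      rw [hgetD', if_pos rfl] at this
      exact Step.noConfusion this
    have hsets : {p : ℕ | isPeakB l p = true ∧ l.getD (p - 1) Step.E = Step.N ∧
          xCoord l p ≤ x}
        = insert i {p : ℕ | isPeakB l' p = true ∧ l'.getD (p - 1) Step.E = Step.N ∧
          xCoord l' p ≤ x + 1} := by
      ext p
      simp only [Set.mem_setOf_eq, Set.mem_insert_iff]
      constructor
      · rintro ⟨hp, hpN, hpx⟩
        by_cases hpi : p = i
        · exact Or.inl hpi
        · refine Or.inr ⟨by rw [hpeak' p]; exact hp, ?_, ?_⟩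
          · have h1 := peak_facts hp
            rw [hgetD', if_neg (by have := hpeaklt p hp; omega)]
            exact hpN
          · rw [hx' p (le_of_lt (peak_facts hp).2.1)]
            split <;> omega
      · rintro (hpi | ⟨hp, hpN, hpx⟩)
        · subst hpi; exact ⟨hi, hNSE, le_refl x⟩
        · rw [hpeak' p] at hp
          have hp1 := peak_facts hp
          have hpi : p ≠ i := by
            intro h
            rw [h, hgetD', if_pos rfl] at hpN
            exact Step.noConfusion hpN
          have hplt : p < i := lt_of_le_of_ne (hpeaklt p hp) hpi
          refine ⟨hp, ?_, ?_⟩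
          · rw [hgetD', if_neg (by omega)] at hpN
            exact hpN
          · exact xCoord_mono l (le_of_lt hplt) (le_of_lt hilen)
    have hW : Wcount l x = Wcount l' (x + 1) + 1 := by
      show Nat.card {p : ℕ // p ∈ {q : ℕ | isPeakB l q = true ∧
          l.getD (q - 1) Step.E = Step.N ∧ xCoord l q ≤ x}} = _
      rw [hsets]
      show Set.ncard _ = _
      rw [Set.ncard_insert_of_notMem hjnot hSfin]
      rfl
    rw [hxi', hW]
    push_cast
    show _ % 2 = _ % 2
    omega
  · -- a peak strictly left of j
    have hplt : i < j := lt_of_le_of_ne hile hij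
    have hxi' : xCoord l' i = xCoord l i := by
      rw [hx' i (le_of_lt hilen), if_neg (by omega)]
      omega
    set x := xCoord l i with hxdef
    have hsets : {p : ℕ | isPeakB l' p = true ∧ l'.getD (p - 1) Step.E = Step.N ∧
          xCoord l' p ≤ x}
        = {p : ℕ | isPeakB l p = true ∧ l.getD (p - 1) Step.E = Step.N ∧
          xCoord l p ≤ x} := by
      have hxj : x < xCoord l j := by
        have h1 : xCoord l (i + 1) = x + 1 := xCoord_succ_SE l hilen hiSE
        have h2 : xCoord l (i + 1) ≤ xCoord l j :=
          xCoord_mono l (by omega) (le_of_lt hjlen)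
        omega
      ext p
      simp only [Set.mem_setOf_eq]
      constructor
      · rintro ⟨hp, hpN, hpx⟩
        rw [hpeak' p] at hp
        have hpi : p ≠ j := by
          intro h
          rw [h, hgetD', if_pos rfl] at hpN
          exact Step.noConfusion hpN
        have hplt' : p < j := lt_of_le_of_ne (hpeaklt p hp) hpi
        rw [hgetD', if_neg (by omega)] at hpN
        rw [hx' p (le_of_lt (peak_facts hp).2.1), if_neg (by omega)] at hpx
        exact ⟨hp, hpN, hpx⟩
      · rintro ⟨hp, hpN, hpx⟩
        have hpj : p ≠ j := by
          intro h
          rw [h] at hpx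
          omega
        have hplt' : p < j := lt_of_le_of_ne (hpeaklt p hp) hpj
        refine ⟨by rw [hpeak' p]; exact hp, ?_, ?_⟩
        · rw [hgetD', if_neg (by omega)]
          exact hpN
        · rw [hx' p (le_of_lt (peak_facts hp).2.1), if_neg (by omega)]
          exact hpx
    have hW : Wcount l' x = Wcount l x := by
      show Nat.card {p : ℕ // p ∈ {q : ℕ | isPeakB l' q = true ∧
          l'.getD (q - 1) Step.E = Step.N ∧ xCoord l' q ≤ x}} = _
      rw [hsets]
      rfl
    rw [hxi', hW]
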